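/- arXiv:1402.4084 — 2 statements merged into one kernel-verified Lean document; each statement's English description precedes it below -/
import Mathlib

section
/- Suppose y_k ∈ {−1, +1} and y_k p̂_k ≤ 0 for every k = 1, …, m (every round is a mistaken round, so y_k p̂_k = −|p̂_k|). Then for every sequence u_1, …, u_m ∈ ℝ^d: Σ_{k=1}^{m} |p̂_k| ≤ (b/2)‖u_1‖² + (c/2) V_m − Σ_{k=1}^{m} y_k u_kᵀ x_k + (1/2) Σ_{k=1}^{m} (u_kᵀ x_k)² + (1/2) Σ_{k=1}^{m} x_kᵀ D_k^{−1} x_k, where V_m = Σ_{k=2}^{m} ‖u_k − u_{k−1}‖². -/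
/-!
The potential `Φ_k = e_kᵀ D_k⁻¹ e_k` pays for the margins. With `ẽ = (I + c⁻¹ D_{k-1})⁻¹ e_{k-1}`
we have `e_k = ẽ + y_k x_k` and `D_k ⪰ (D_{k-1}⁻¹ + c⁻¹ I)⁻¹`, so on a mistaken round
`2 |p̂_k| ≤ Φ_{k-1} - Φ_k + x_kᵀ D_k⁻¹ x_k - e_{k-1}ᵀ (D_{k-1} + c I)⁻¹ e_{k-1}`.
On the comparator side, minimizing `½ vᵀ D v - eᵀ v + (c/2) ‖w - v‖²` over `v` gives
`½ wᵀ (D⁻¹ + c⁻¹ I)⁻¹ w - ẽᵀ w - ½ eᵀ (D + c I)⁻¹ e`, so `½ u_mᵀ D_m u_m - e_mᵀ u_m` is bounded by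
the comparator's loss up to the same correction terms. Completing the square,
`e_mᵀ u_m - ½ u_mᵀ D_m u_m ≤ ½ Φ_m`, joins the two telescoping sums.
-/

set_option autoImplicit false

open Matrix Finset

noncomputable section

/-- `D_0 = (bc/(c-b)) I`, `D_k = (D_{k-1}⁻¹ + c⁻¹ I)⁻¹ + x_k x_kᵀ` for `k ≥ 1`. -/
def lasecD (d : ℕ) (b c : ℝ) (x : ℕ → Fin d → ℝ) : ℕ → Matrix (Fin d) (Fin d) ℝ
  | 0 => (b * c / (c - b)) • (1 : Matrix (Fin d) (Fin d) ℝ)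
  | k + 1 => ((lasecD d b c x k)⁻¹ + c⁻¹ • (1 : Matrix (Fin d) (Fin d) ℝ))⁻¹
      + vecMulVec (x (k + 1)) (x (k + 1))

/-- `e_0 = 0`, `e_k = (I + c⁻¹ D_{k-1})⁻¹ e_{k-1} + y_k x_k` for `k ≥ 1`. -/
def lasecE (d : ℕ) (b c : ℝ) (x : ℕ → Fin d → ℝ) (y : ℕ → ℝ) : ℕ → (Fin d → ℝ)
  | 0 => 0
  | k + 1 => ((1 : Matrix (Fin d) (Fin d) ℝ) + c⁻¹ • lasecD d b c x k)⁻¹ *ᵥ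
        lasecE d b c x y k + y (k + 1) • x (k + 1)

/-- The margin `p̂_k = x_kᵀ D_k⁻¹ (I + c⁻¹ D_{k-1})⁻¹ e_{k-1}`. -/
def lasecPhat (d : ℕ) (b c : ℝ) (x : ℕ → Fin d → ℝ) (y : ℕ → ℝ) (k : ℕ) : ℝ :=
  x k ⬝ᵥ ((lasecD d b c x k)⁻¹ *ᵥ
    (((1 : Matrix (Fin d) (Fin d) ℝ) + c⁻¹ • lasecD d b c x (k - 1))⁻¹ *ᵥ
      lasecE d b c x y (k - 1)))

section QuadraticForms
variable {n : Type*} [Fintype n]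

lemma Matrix.IsHermitian.mulVec_dotProduct {M : Matrix n n ℝ} (hM : M.IsHermitian) (v w : n → ℝ) :
    (M *ᵥ v) ⬝ᵥ w = v ⬝ᵥ (M *ᵥ w) := by
  rw [dotProduct_comm, dotProduct_mulVec, ← mulVec_transpose, (isHermitian_iff_isSymm.mp hM).eq,
    dotProduct_comm]

variable [DecidableEq n]

lemma Matrix.PosDef.mulVec_inv_mulVec {P : Matrix n n ℝ} (hP : P.PosDef) (v : n → ℝ) :
    P *ᵥ (P⁻¹ *ᵥ v) = v := by
  rw [mulVec_mulVec, mul_nonsing_inv _ ((isUnit_iff_isUnit_det P).mp hP.isUnit), one_mulVec]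

lemma Matrix.PosDef.inv_mulVec_mulVec {P : Matrix n n ℝ} (hP : P.PosDef) (v : n → ℝ) :
    P⁻¹ *ᵥ (P *ᵥ v) = v := by
  rw [mulVec_mulVec, nonsing_inv_mul _ ((isUnit_iff_isUnit_det P).mp hP.isUnit), one_mulVec]

lemma Matrix.PosDef.dotProduct_sub_half_le {M : Matrix n n ℝ} (hM : M.PosDef) (e v : n → ℝ) :
    e ⬝ᵥ v - v ⬝ᵥ (M *ᵥ v) / 2 ≤ e ⬝ᵥ (M⁻¹ *ᵥ e) / 2 := by
  have hsq := hM.posSemidef.dotProduct_mulVec_nonneg (v - M⁻¹ *ᵥ e)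
  simp only [star_trivial, mulVec_sub, hM.mulVec_inv_mulVec, dotProduct_sub, sub_dotProduct,
    hM.inv.isHermitian.mulVec_dotProduct, hM.inv_mulVec_mulVec, dotProduct_comm v e] at hsq
  linarith

lemma Matrix.PosDef.dotProduct_inv_add_mulVec_le {P S : Matrix n n ℝ} (hP : P.PosDef)
    (hS : S.PosSemidef) (v : n → ℝ) : v ⬝ᵥ ((P + S)⁻¹ *ᵥ v) ≤ v ⬝ᵥ (P⁻¹ *ᵥ v) := by
  have hPS := hP.add_posSemidef hS
  set z := (P + S)⁻¹ *ᵥ v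
  have hz : (P + S) *ᵥ z = v := hPS.mulVec_inv_mulVec v
  have hSz : 0 ≤ z ⬝ᵥ (S *ᵥ z) := by simpa using hS.dotProduct_mulVec_nonneg z
  have hsq := hP.dotProduct_sub_half_le v z
  have hvz : z ⬝ᵥ (P *ᵥ z) + z ⬝ᵥ (S *ᵥ z) = v ⬝ᵥ z := by
    rw [← dotProduct_add, ← add_mulVec, hz, dotProduct_comm]
  linarith

section Drift
variable {c : ℝ} {D : Matrix n n ℝ}

lemma Matrix.PosDef.one_add_inv_smul_inv_mulVec (hc : 0 < c) (hD : D.PosDef) (p : n → ℝ) :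
    (1 + c⁻¹ • D)⁻¹ *ᵥ ((D + c • 1) *ᵥ p) = c • p := by
  have hA : (1 + c⁻¹ • D).PosDef := PosDef.one.add (hD.smul (inv_pos.2 hc))
  rw [← hA.inv_mulVec_mulVec (c • p)]
  congr 1
  simp only [add_mulVec, one_mulVec, smul_mulVec, mulVec_smul]
  rw [smul_add, smul_smul, mul_inv_cancel₀ hc.ne', one_smul, add_comm]

lemma Matrix.PosDef.inv_add_inv_smul_one_inv_mulVec (hc : 0 < c) (hD : D.PosDef) (w : n → ℝ) :
    (D⁻¹ + c⁻¹ • 1)⁻¹ *ᵥ w = c • w - (c * c) • ((D + c • 1)⁻¹ *ᵥ w) := by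
  have hA : (D⁻¹ + c⁻¹ • 1 : Matrix n n ℝ).PosDef := hD.inv.add (PosDef.one.smul (inv_pos.2 hc))
  have hM : (D + c • 1).PosDef := hD.add (PosDef.one.smul hc)
  have hw := hM.mulVec_inv_mulVec w
  set r := (D + c • 1)⁻¹ *ᵥ w
  rw [add_mulVec, smul_mulVec, one_mulVec] at hw
  rw [← hA.inv_mulVec_mulVec (c • w - (c * c) • r)]
  congr 1
  rw [← hw]
  simp only [add_mulVec, smul_mulVec, one_mulVec, mulVec_add, mulVec_sub, mulVec_smul,
    hD.inv_mulVec_mulVec]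
  match_scalars <;> field_simp <;> ring

lemma Matrix.PosDef.drift_quad_eq (hc : 0 < c) (hD : D.PosDef) (e : n → ℝ) :
    ((1 + c⁻¹ • D)⁻¹ *ᵥ e) ⬝ᵥ ((D⁻¹ + c⁻¹ • 1) *ᵥ ((1 + c⁻¹ • D)⁻¹ *ᵥ e)) =
      e ⬝ᵥ (D⁻¹ *ᵥ e) - e ⬝ᵥ ((D + c • 1)⁻¹ *ᵥ e) := by
  have hM : (D + c • 1).PosDef := hD.add (PosDef.one.smul hc)
  obtain ⟨p, rfl⟩ : ∃ p, e = (D + c • 1) *ᵥ p := ⟨_, (hM.mulVec_inv_mulVec e).symm⟩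
  rw [hD.one_add_inv_smul_inv_mulVec hc, hM.inv_mulVec_mulVec]
  simp only [add_mulVec, smul_mulVec, one_mulVec, mulVec_add, mulVec_smul, hD.inv_mulVec_mulVec,
    dotProduct_add, add_dotProduct, smul_dotProduct, dotProduct_smul, smul_eq_mul,
    hD.isHermitian.mulVec_dotProduct, hD.mulVec_inv_mulVec]
  field_simp
  ring

lemma Matrix.PosDef.drift_quad_le (hc : 0 < c) (hD : D.PosDef) (e v w : n → ℝ) :
    w ⬝ᵥ ((D⁻¹ + c⁻¹ • 1)⁻¹ *ᵥ w) / 2 - ((1 + c⁻¹ • D)⁻¹ *ᵥ e) ⬝ᵥ w ≤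
      v ⬝ᵥ (D *ᵥ v) / 2 - e ⬝ᵥ v + c / 2 * ((w - v) ⬝ᵥ (w - v)) +
        e ⬝ᵥ ((D + c • 1)⁻¹ *ᵥ e) / 2 := by
  have hM : (D + c • 1).PosDef := hD.add (PosDef.one.smul hc)
  obtain ⟨p, rfl⟩ : ∃ p, e = (D + c • 1) *ᵥ p := ⟨_, (hM.mulVec_inv_mulVec e).symm⟩
  have hsq := hM.dotProduct_sub_half_le ((D + c • 1) *ᵥ p + c • w) v
  rw [hD.one_add_inv_smul_inv_mulVec hc, hD.inv_add_inv_smul_one_inv_mulVec hc,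
    hM.inv_mulVec_mulVec]
  simp only [mulVec_add, mulVec_smul, hM.inv_mulVec_mulVec, dotProduct_add, add_dotProduct,
    smul_dotProduct, dotProduct_smul, smul_eq_mul, dotProduct_sub, sub_dotProduct,
    hM.isHermitian.mulVec_dotProduct, hM.mulVec_inv_mulVec] at hsq ⊢
  simp only [add_mulVec, smul_mulVec, one_mulVec, dotProduct_add, dotProduct_smul,
    smul_eq_mul] at hsq ⊢
  rw [dotProduct_comm w p, dotProduct_comm w v, dotProduct_comm p v] at *
  linarith

end Drift

end QuadraticForms

section Lasec
variable {d : ℕ} {b c : ℝ} {x : ℕ → Fin d → ℝ} {y : ℕ → ℝ}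

local notation "𝐃" => lasecD d b c x
local notation "𝐞" => lasecE d b c x y

lemma lasecD_posDef (hb : 0 < b) (hbc : b < c) (k : ℕ) : (𝐃 k).PosDef := by
  induction k with
  | zero => exact PosDef.one.smul (div_pos (mul_pos hb (hb.trans hbc)) (sub_pos.2 hbc))
  | succ k ih =>
    exact (ih.inv.add (PosDef.one.smul (inv_pos.2 (hb.trans hbc)))).inv.add_posSemidef
      (by simpa using posSemidef_vecMulVec_self_star (x (k + 1)))

lemma lasecD_one (hb : 0 < b) (hbc : b < c) : 𝐃 1 = b • 1 + vecMulVec (x 1) (x 1) := by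
  have inv_smul_one (r : ℝ) (hr : r ≠ 0) : (r • 1 : Matrix (Fin d) (Fin d) ℝ)⁻¹ = r⁻¹ • 1 :=
    inv_eq_left_inv (by rw [smul_mul_smul_comm, inv_mul_cancel₀ hr, one_mul, one_smul])
  have hcb : (b * c / (c - b))⁻¹ + c⁻¹ = b⁻¹ := by
    field_simp [(hb.trans hbc).ne', (sub_pos.2 hbc).ne']
    ring
  rw [lasecD, lasecD, inv_smul_one _ (div_pos (mul_pos hb (hb.trans hbc)) (sub_pos.2 hbc)).ne',
    ← add_smul, hcb, inv_smul_one _ (inv_ne_zero hb.ne'), inv_inv]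

lemma lasecE_zero : 𝐞 0 = 0 := rfl

lemma lasecE_one : 𝐞 1 = y 1 • x 1 := by
  simp [lasecE]

lemma two_mul_abs_lasecPhat_succ_le (hb : 0 < b) (hbc : b < c) (k : ℕ)
    (hy : y (k + 1) = -1 ∨ y (k + 1) = 1) (hmis : y (k + 1) * lasecPhat d b c x y (k + 1) ≤ 0) :
    2 * |lasecPhat d b c x y (k + 1)| ≤
      𝐞 k ⬝ᵥ ((𝐃 k)⁻¹ *ᵥ 𝐞 k) - 𝐞 (k + 1) ⬝ᵥ ((𝐃 (k + 1))⁻¹ *ᵥ 𝐞 (k + 1))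
        + x (k + 1) ⬝ᵥ ((𝐃 (k + 1))⁻¹ *ᵥ x (k + 1)) - 𝐞 k ⬝ᵥ ((𝐃 k + c • 1)⁻¹ *ᵥ 𝐞 k) := by
  have hc : 0 < c := hb.trans hbc
  have hD := lasecD_posDef (x := x) hb hbc
  set e' := (1 + c⁻¹ • 𝐃 k)⁻¹ *ᵥ 𝐞 k
  set A := (𝐃 k)⁻¹ + c⁻¹ • (1 : Matrix (Fin d) (Fin d) ℝ)
  have hA : A.PosDef := (hD k).inv.add (PosDef.one.smul (inv_pos.2 hc))
  have hphat : lasecPhat d b c x y (k + 1) = x (k + 1) ⬝ᵥ ((𝐃 (k + 1))⁻¹ *ᵥ e') := rfl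
  have hy1 : |y (k + 1)| = 1 := by rcases hy with h | h <;> simp [h]
  have habs : |lasecPhat d b c x y (k + 1)| = -(y (k + 1) * lasecPhat d b c x y (k + 1)) := by
    rw [← abs_of_nonpos hmis, abs_mul, hy1, one_mul]
  have hpot : 𝐞 (k + 1) ⬝ᵥ ((𝐃 (k + 1))⁻¹ *ᵥ 𝐞 (k + 1)) = e' ⬝ᵥ ((𝐃 (k + 1))⁻¹ *ᵥ e')
      + 2 * (y (k + 1) * lasecPhat d b c x y (k + 1)) + x (k + 1) ⬝ᵥ ((𝐃 (k + 1))⁻¹ *ᵥ x (k + 1)) := by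
    have hy2 : y (k + 1) * y (k + 1) = 1 := by rw [← abs_mul_abs_self, hy1, one_mul]
    rw [show 𝐞 (k + 1) = e' + y (k + 1) • x (k + 1) from rfl, hphat]
    simp only [mulVec_add, mulVec_smul, dotProduct_add, add_dotProduct, dotProduct_smul,
      smul_dotProduct, smul_eq_mul]
    rw [← (hD (k + 1)).inv.isHermitian.mulVec_dotProduct e' (x (k + 1)),
      dotProduct_comm _ (x (k + 1))]
    linear_combination (x (k + 1) ⬝ᵥ ((𝐃 (k + 1))⁻¹ *ᵥ x (k + 1))) * hy2
  have hmono : e' ⬝ᵥ ((𝐃 (k + 1))⁻¹ *ᵥ e') ≤ e' ⬝ᵥ (A *ᵥ e') := by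
    have h := hA.inv.dotProduct_inv_add_mulVec_le
      (by simpa using posSemidef_vecMulVec_self_star (x (k + 1))) e'
    rwa [nonsing_inv_nonsing_inv _ ((isUnit_iff_isUnit_det A).mp hA.isUnit)] at h
  have hdrift := (hD k).drift_quad_eq hc (𝐞 k)
  linarith

lemma two_mul_sum_abs_lasecPhat_le (hb : 0 < b) (hbc : b < c) (m : ℕ)
    (hy : ∀ k ∈ Icc 1 m, y k = -1 ∨ y k = 1)
    (hmis : ∀ k ∈ Icc 1 m, y k * lasecPhat d b c x y k ≤ 0) :
    2 * ∑ k ∈ Icc 1 m, |lasecPhat d b c x y k| + 𝐞 m ⬝ᵥ ((𝐃 m)⁻¹ *ᵥ 𝐞 m)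
        + ∑ k ∈ range m, 𝐞 k ⬝ᵥ ((𝐃 k + c • 1)⁻¹ *ᵥ 𝐞 k) ≤
      ∑ k ∈ Icc 1 m, x k ⬝ᵥ ((𝐃 k)⁻¹ *ᵥ x k) := by
  induction m with
  | zero => simp [lasecE_zero]
  | succ m ih =>
    have hmem : m + 1 ∈ Icc 1 (m + 1) := by simp
    have hsub : Icc 1 m ⊆ Icc 1 (m + 1) := Icc_subset_Icc_right (by omega)
    have hstep := two_mul_abs_lasecPhat_succ_le hb hbc m (hy _ hmem) (hmis _ hmem)
    have ih' := ih (fun k hk => hy k (hsub hk)) (fun k hk => hmis k (hsub hk))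
    rw [sum_Icc_succ_top (by omega), sum_Icc_succ_top (by omega), sum_range_succ]
    linarith

lemma lasec_comparator_le (hb : 0 < b) (hbc : b < c) {m : ℕ} (hm : 1 ≤ m)
    (u : ℕ → Fin d → ℝ) :
    u m ⬝ᵥ (𝐃 m *ᵥ u m) / 2 - 𝐞 m ⬝ᵥ u m
        - (∑ k ∈ range m, 𝐞 k ⬝ᵥ ((𝐃 k + c • 1)⁻¹ *ᵥ 𝐞 k)) / 2 ≤
      (b / 2) * (∑ i, (u 1 i) ^ 2)
      + (c / 2) * ∑ k ∈ Icc 2 m, ∑ i, (u k i - u (k - 1) i) ^ 2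
      - ∑ k ∈ Icc 1 m, y k * (u k ⬝ᵥ x k)
      + (1 / 2) * ∑ k ∈ Icc 1 m, (u k ⬝ᵥ x k) ^ 2 := by
  induction m, hm using Nat.le_induction with
  | base =>
    have hnorm : u 1 ⬝ᵥ u 1 = ∑ i, u 1 i ^ 2 := by simp only [dotProduct, sq]
    simp only [lasecD_one hb hbc, lasecE_one, lasecE_zero, range_one, sum_singleton, Icc_self,
      show Icc 2 1 = ∅ from rfl, sum_empty, add_mulVec, smul_mulVec, one_mulVec, vecMulVec_mulVec,
      op_smul_eq_smul, dotProduct_add, dotProduct_smul, smul_dotProduct, smul_eq_mul,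
      zero_dotProduct, dotProduct_comm (x 1), hnorm]
    linarith
  | succ m hm ih =>
    have hstep := (lasecD_posDef (x := x) hb hbc m).drift_quad_le (hb.trans hbc)
      (𝐞 m) (u m) (u (m + 1))
    have hquad : u (m + 1) ⬝ᵥ (𝐃 (m + 1) *ᵥ u (m + 1)) =
        u (m + 1) ⬝ᵥ (((𝐃 m)⁻¹ + c⁻¹ • 1)⁻¹ *ᵥ u (m + 1)) + (u (m + 1) ⬝ᵥ x (m + 1)) ^ 2 := by
      rw [lasecD, add_mulVec, vecMulVec_mulVec, op_smul_eq_smul, dotProduct_add, dotProduct_smul,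
        smul_eq_mul, dotProduct_comm (x (m + 1)), sq]
    have hlin : 𝐞 (m + 1) ⬝ᵥ u (m + 1) =
        ((1 + c⁻¹ • 𝐃 m)⁻¹ *ᵥ 𝐞 m) ⬝ᵥ u (m + 1) + y (m + 1) * (u (m + 1) ⬝ᵥ x (m + 1)) := by
      rw [lasecE, add_dotProduct, smul_dotProduct, smul_eq_mul, dotProduct_comm (x (m + 1))]
    have hdist : (u (m + 1) - u m) ⬝ᵥ (u (m + 1) - u m) = ∑ i, (u (m + 1) i - u m i) ^ 2 := by
      simp only [dotProduct, Pi.sub_apply, sq]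
    rw [sum_range_succ, sum_Icc_succ_top (by omega), sum_Icc_succ_top (by omega),
      sum_Icc_succ_top (by omega), Nat.add_sub_cancel]
    rw [hdist] at hstep
    linarith

end Lasec

theorem lasec_margin_bound_general (d : ℕ) (b c : ℝ) (hb : 0 < b) (hbc : b < c)
    (m : ℕ) (hm : 1 ≤ m) (x : ℕ → Fin d → ℝ) (y : ℕ → ℝ)
    (hy : ∀ k ∈ Icc 1 m, y k = -1 ∨ y k = 1)
    (hmis : ∀ k ∈ Icc 1 m, y k * lasecPhat d b c x y k ≤ 0)
    (u : ℕ → Fin d → ℝ) :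
    ∑ k ∈ Icc 1 m, |lasecPhat d b c x y k| ≤
      (b / 2) * (∑ i, (u 1 i) ^ 2)
      + (c / 2) * ∑ k ∈ Icc 2 m, ∑ i, (u k i - u (k - 1) i) ^ 2
      - ∑ k ∈ Icc 1 m, y k * (u k ⬝ᵥ x k)
      + (1 / 2) * ∑ k ∈ Icc 1 m, (u k ⬝ᵥ x k) ^ 2
      + (1 / 2) * ∑ k ∈ Icc 1 m, x k ⬝ᵥ ((lasecD d b c x k)⁻¹ *ᵥ x k) := by
  have hpot := two_mul_sum_abs_lasecPhat_le hb hbc m hy hmis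
  have hcomp := lasec_comparator_le (x := x) (y := y) hb hbc hm u
  have hsq := (lasecD_posDef (x := x) hb hbc m).dotProduct_sub_half_le (lasecE d b c x y m) (u m)
  linarith

/-- if every round `k = 1,…,m` is a mistaken round
(`y_k ∈ {-1,+1}` and `y_k p̂_k ≤ 0`), then
`Σ|p̂_k| ≤ (b/2)‖u_1‖² + (c/2)V_m - Σ y_k u_kᵀx_k + (1/2)Σ(u_kᵀx_k)² + (1/2)Σ x_kᵀD_k⁻¹x_k`. -/
theorem lasec_margin_bound (d : ℕ) (hd : 1 ≤ d) (b c : ℝ) (hb : 0 < b) (hbc : b < c)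
    (m : ℕ) (hm : 1 ≤ m) (x : ℕ → Fin d → ℝ) (y : ℕ → ℝ)
    (hy : ∀ k ∈ Icc 1 m, y k = -1 ∨ y k = 1)
    (hmis : ∀ k ∈ Icc 1 m, y k * lasecPhat d b c x y k ≤ 0)
    (u : ℕ → Fin d → ℝ) :
    ∑ k ∈ Icc 1 m, |lasecPhat d b c x y k| ≤
      (b / 2) * (∑ i, (u 1 i) ^ 2)
      + (c / 2) * ∑ k ∈ Icc 2 m, ∑ i, (u k i - u (k - 1) i) ^ 2
      - ∑ k ∈ Icc 1 m, y k * (u k ⬝ᵥ x k)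
      + (1 / 2) * ∑ k ∈ Icc 1 m, (u k ⬝ᵥ x k) ^ 2
      + (1 / 2) * ∑ k ∈ Icc 1 m, x k ⬝ᵥ ((lasecD d b c x k)⁻¹ *ᵥ x k) :=
  lasec_margin_bound_general d b c hb hbc m hm x y hy hmis u

end
end

section
/- (Inequality (a4).) Suppose ‖x_j‖² ≤ X² for every j = 1, …, m, where X > 0. Then Σ_{k=1}^{m} x_kᵀ D_k^{−1} x_k ≤ ln det( (1/b) D_m ) + c^{−1} Tr(D_0) + (m/c) · d · max{ (3X² + √(X⁴ + 4X²c))/2 , b + X² }. -/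
/-!
Write `B_k = (D_{k-1}⁻¹ + c⁻¹ I)⁻¹`, so that `D_k = B_k + x_k x_kᵀ`. With `s = x_kᵀ B_k⁻¹ x_k ≥ 0`,
the matrix determinant lemma and Sherman–Morrison give `x_kᵀ D_k⁻¹ x_k = s / (1 + s) ≤ ln (1 + s)
= ln det D_k - ln det B_k`, while `B_k = D_{k-1} (I + D_{k-1}/c)⁻¹` and `ln det M ≤ Tr M - d` give
`ln det B_k ≥ ln det D_{k-1} - Tr(D_{k-1})/c`. Summing, the log-determinants telescope to
`ln det D_m - ln det D_0 ≤ ln det (D_m / b)` (as `D_0 ≥ b I`), and the traces of `D_1, …, D_{m-1}`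
are at most `d K`, `K` the maximum in the statement: in the Loewner order `D ≤ t I` implies
`B ≤ (t⁻¹ + c⁻¹)⁻¹ I` because inversion is antitone, `D_0` yields exactly `B_1 = b I`, and `K`
dominates the fixed point of `t ↦ (t⁻¹ + c⁻¹)⁻¹ + X²`.
-/

set_option autoImplicit false

open Matrix Finset

noncomputable section

open scoped MatrixOrder

namespace Matrix

variable {n : Type*} [Fintype n]

theorem IsHermitian.dotProduct_mulVec_comm {A : Matrix n n ℝ} (hA : A.IsHermitian)
    (v w : n → ℝ) : v ⬝ᵥ (A *ᵥ w) = w ⬝ᵥ (A *ᵥ v) := by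
  rw [dotProduct_mulVec, ← mulVec_transpose, ← conjTranspose_eq_transpose_of_trivial, hA.eq,
    dotProduct_comm]

theorem trace_mono {A B : Matrix n n ℝ} (h : A ≤ B) : A.trace ≤ B.trace := by
  simpa [trace_sub] using (le_iff.mp h).trace_nonneg

variable [DecidableEq n]

theorem smul_one_inv {K : Type*} [Field K] (a : K) : (a • (1 : Matrix n n K))⁻¹ = a⁻¹ • 1 := by
  rcases eq_or_ne a 0 with rfl | ha
  · simp
  · exact inv_eq_left_inv (by rw [smul_mul_smul_comm, inv_mul_cancel₀ ha, one_mul, one_smul])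

/-- The variational formula `v ⬝ A⁻¹ v = max_w (2 v ⬝ w - w ⬝ A w)` makes inversion antitone. -/
theorem PosDef.inv_anti {A B : Matrix n n ℝ} (hA : A.PosDef) (hAB : A ≤ B) : B⁻¹ ≤ A⁻¹ := by
  have hB : B.PosDef := by simpa using hA.add_posSemidef (le_iff.mp hAB)
  refine le_iff.mpr <| .of_dotProduct_mulVec_nonneg (hA.inv.isHermitian.sub hB.inv.isHermitian)
    fun v => ?_
  set z := A⁻¹ *ᵥ v
  set w := B⁻¹ *ᵥ v
  have hAz : A *ᵥ z = v := by simp [z, mulVec_mulVec, mul_nonsing_inv _ hA.det_pos.ne'.isUnit]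
  have hBw : B *ᵥ w = v := by simp [w, mulVec_mulVec, mul_nonsing_inv _ hB.det_pos.ne'.isUnit]
  have hsq := hA.posSemidef.dotProduct_mulVec_nonneg (w - z)
  have hgap := (le_iff.mp hAB).dotProduct_mulVec_nonneg w
  have hswap := hA.isHermitian.dotProduct_mulVec_comm z w
  simp only [star_trivial, mulVec_sub, sub_mulVec, dotProduct_sub, sub_dotProduct, hAz, hBw]
    at hsq hgap ⊢
  rw [hswap, hAz] at hsq
  linarith [dotProduct_comm v z, dotProduct_comm v w]

theorem vecMulVec_self_le_smul_one (u : n → ℝ) : vecMulVec u u ≤ (u ⬝ᵥ u) • 1 := by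
  refine le_iff.mpr <| .of_dotProduct_mulVec_nonneg
    ((PosSemidef.one.smul (dotProduct_self_star_nonneg u)).isHermitian.sub ?_) fun v => ?_
  · simpa using (posSemidef_vecMulVec_self_star u).isHermitian
  · have hcs : (u ⬝ᵥ v) ^ 2 ≤ (u ⬝ᵥ u) * (v ⬝ᵥ v) := by
      simpa [dotProduct, sq] using Finset.sum_mul_sq_le_sq_mul_sq Finset.univ u v
    simp only [star_trivial, sub_mulVec, smul_mulVec, one_mulVec, vecMulVec_mulVec,
      dotProduct_sub, dotProduct_smul]
    rw [op_smul_eq_mul, smul_eq_mul, dotProduct_comm v u]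
    linarith

theorem det_add_vecMulVec {R : Type*} [CommRing R] {B : Matrix n n R} (hB : IsUnit B.det)
    (u v : n → R) : (B + vecMulVec u v).det = B.det * (1 + v ⬝ᵥ (B⁻¹ *ᵥ u)) := by
  rw [vecMulVec_eq Unit, det_add_replicateCol_mul_replicateRow hB]
  congr 1
  rw [det_unique, Matrix.mul_assoc, ← replicateCol_mulVec]
  simp

theorem dotProduct_inv_add_vecMulVec_mulVec {K : Type*} [Field K] {B : Matrix n n K}
    (hB : IsUnit B.det) (u v : n → K) (hs : 1 + v ⬝ᵥ (B⁻¹ *ᵥ u) ≠ 0) :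
    v ⬝ᵥ ((B + vecMulVec u v)⁻¹ *ᵥ u) = v ⬝ᵥ (B⁻¹ *ᵥ u) / (1 + v ⬝ᵥ (B⁻¹ *ᵥ u)) := by
  set s := v ⬝ᵥ (B⁻¹ *ᵥ u)
  have hC : IsUnit (B + vecMulVec u v).det := by
    rw [det_add_vecMulVec hB]; exact hB.mul hs.isUnit
  have hCBu : (B + vecMulVec u v) *ᵥ (B⁻¹ *ᵥ u) = (1 + s) • u := by
    rw [add_mulVec, mulVec_mulVec, mul_nonsing_inv _ hB, one_mulVec, vecMulVec_mulVec,
      op_smul_eq_smul, add_smul, one_smul]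
  have hBu : B⁻¹ *ᵥ u = (1 + s) • ((B + vecMulVec u v)⁻¹ *ᵥ u) := by
    rw [← mulVec_smul, ← hCBu, mulVec_mulVec, nonsing_inv_mul _ hC, one_mulVec]
  rw [eq_div_iff hs]
  calc v ⬝ᵥ ((B + vecMulVec u v)⁻¹ *ᵥ u) * (1 + s)
      = v ⬝ᵥ ((1 + s) • ((B + vecMulVec u v)⁻¹ *ᵥ u)) := by
        rw [dotProduct_smul, smul_eq_mul, mul_comm]
    _ = s := by rw [← hBu]

theorem det_inv_add_smul_one_inv {K : Type*} [Field K] {D : Matrix n n K} (hD : IsUnit D.det)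
    (a : K) : ((D⁻¹ + a • 1)⁻¹).det = D.det / (1 + a • D).det := by
  have hfac : D⁻¹ + a • 1 = D⁻¹ * (1 + a • D) := by
    rw [Matrix.mul_add, Matrix.mul_one, Matrix.mul_smul, nonsing_inv_mul _ hD]
  rw [hfac, det_nonsing_inv, det_mul, det_nonsing_inv, Ring.inverse_eq_inv', mul_inv, inv_inv,
    div_eq_mul_inv, mul_comm]

theorem PosDef.log_det_le_trace_sub_card {M : Matrix n n ℝ} (hM : M.PosDef) :
    Real.log M.det ≤ M.trace - Fintype.card n := by
  rw [hM.isHermitian.det_eq_prod_eigenvalues, hM.isHermitian.trace_eq_sum_eigenvalues]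
  simp only [RCLike.ofReal_real_eq_id, id]
  rw [Real.log_prod fun i _ => (hM.eigenvalues_pos i).ne', ← Finset.card_univ, ← nsmul_one,
    ← Finset.sum_const, ← Finset.sum_sub_distrib]
  exact Finset.sum_le_sum fun i _ => Real.log_le_sub_one_of_pos (hM.eigenvalues_pos i)

theorem PosDef.dotProduct_inv_add_vecMulVec_mulVec_le {B : Matrix n n ℝ} (hB : B.PosDef)
    (u : n → ℝ) :
    u ⬝ᵥ ((B + vecMulVec u u)⁻¹ *ᵥ u) ≤ Real.log (B + vecMulVec u u).det - Real.log B.det := by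
  have hs : 0 ≤ u ⬝ᵥ (B⁻¹ *ᵥ u) := by
    simpa using hB.inv.posSemidef.dotProduct_mulVec_nonneg u
  have hB' : IsUnit B.det := hB.det_pos.ne'.isUnit
  rw [dotProduct_inv_add_vecMulVec_mulVec hB' u u (by positivity), det_add_vecMulVec hB',
    Real.log_mul hB.det_pos.ne' (by positivity), add_sub_cancel_left]
  have hlog := Real.one_sub_inv_le_log_of_pos (by positivity : 0 < 1 + u ⬝ᵥ (B⁻¹ *ᵥ u))
  convert hlog using 1
  field_simp
  ring

theorem PosDef.inv_add_smul_one_inv_le {D : Matrix n n ℝ} (hD : D.PosDef) {t c : ℝ}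
    (ht : 0 < t) (hc : 0 < c) (hDt : D ≤ t • 1) :
    (D⁻¹ + c⁻¹ • 1)⁻¹ ≤ (t⁻¹ + c⁻¹)⁻¹ • (1 : Matrix n n ℝ) := by
  have hinv : t⁻¹ • 1 ≤ D⁻¹ := by simpa [smul_one_inv] using hD.inv_anti hDt
  have hsum : (t⁻¹ + c⁻¹) • (1 : Matrix n n ℝ) ≤ D⁻¹ + c⁻¹ • 1 := by
    rw [add_smul]; exact add_le_add_left hinv _
  simpa [smul_one_inv] using (PosDef.one.smul (by positivity)).inv_anti hsum

end Matrix

/-- `(X² + √(X⁴ + 4X²c)) / 2` is the positive root of `K² = X² (K + c)`, the fixed-point equation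
of `t ↦ (t⁻¹ + c⁻¹)⁻¹ + X²`. -/
theorem inv_add_inv_inv_add_sq_le {X c K : ℝ} (hc : 0 < c) (hK0 : 0 < K)
    (hK : (X ^ 2 + √(X ^ 4 + 4 * X ^ 2 * c)) / 2 ≤ K) : (K⁻¹ + c⁻¹)⁻¹ + X ^ 2 ≤ K := by
  have hq := Real.sq_sqrt (by positivity : 0 ≤ X ^ 4 + 4 * X ^ 2 * c)
  have hq0 := Real.sqrt_nonneg (X ^ 4 + 4 * X ^ 2 * c)
  have hroot : X ^ 2 * (K + c) ≤ K ^ 2 := by nlinarith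
  have hKc : (K⁻¹ + c⁻¹)⁻¹ = K * c / (K + c) := by field_simp; ring
  rw [hKc, div_add' _ _ _ (by positivity), div_le_iff₀ (by positivity)]
  nlinarith

section lasecD

variable {d : ℕ} {b c : ℝ} (x : ℕ → Fin d → ℝ)

theorem posDef_lasecD (hb : 0 < b) (hbc : b < c) : ∀ k, (lasecD d b c x k).PosDef
  | 0 => PosDef.one.smul (div_pos (mul_pos hb (hb.trans hbc)) (sub_pos.mpr hbc))
  | k + 1 => ((posDef_lasecD hb hbc k).inv.add (PosDef.one.smul (inv_pos.mpr (hb.trans hbc)))).inv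
      |>.add_posSemidef (by simpa using posSemidef_vecMulVec_self_star (x (k + 1)))

theorem dotProduct_lasecD_inv_mulVec_le (hb : 0 < b) (hbc : b < c) (k : ℕ) :
    x (k + 1) ⬝ᵥ ((lasecD d b c x (k + 1))⁻¹ *ᵥ x (k + 1)) ≤
      Real.log (lasecD d b c x (k + 1)).det - Real.log (lasecD d b c x k).det
        + c⁻¹ * (lasecD d b c x k).trace := by
  have hc : 0 < c := hb.trans hbc
  set D := lasecD d b c x k
  have hD : D.PosDef := posDef_lasecD x hb hbc k
  have hB : (D⁻¹ + c⁻¹ • (1 : Matrix (Fin d) (Fin d) ℝ))⁻¹.PosDef :=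
    (hD.inv.add (PosDef.one.smul (inv_pos.mpr hc))).inv
  have hM : (1 + c⁻¹ • D).PosDef := PosDef.one.add (hD.smul (inv_pos.mpr hc))
  have hlogB : Real.log ((D⁻¹ + c⁻¹ • 1)⁻¹).det
      = Real.log D.det - Real.log (1 + c⁻¹ • D).det := by
    rw [det_inv_add_smul_one_inv hD.det_pos.ne'.isUnit, Real.log_div hD.det_pos.ne' hM.det_pos.ne']
  have hlogM : Real.log (1 + c⁻¹ • D).det ≤ c⁻¹ * D.trace := by
    have := hM.log_det_le_trace_sub_card
    rwa [trace_add, trace_one, trace_smul, smul_eq_mul, add_sub_cancel_left] at this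
  have hstep := hB.dotProduct_inv_add_vecMulVec_mulVec_le (x (k + 1))
  rw [lasecD]
  linarith

theorem sum_dotProduct_lasecD_inv_mulVec_le (hb : 0 < b) (hbc : b < c) (m : ℕ) :
    ∑ k ∈ Icc 1 m, x k ⬝ᵥ ((lasecD d b c x k)⁻¹ *ᵥ x k) ≤
      Real.log (lasecD d b c x m).det - Real.log (lasecD d b c x 0).det
        + c⁻¹ * ∑ k ∈ range m, (lasecD d b c x k).trace := by
  induction m with
  | zero => simp
  | succ m ih =>
    rw [sum_Icc_succ_top (by omega), sum_range_succ, mul_add]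
    linarith [dotProduct_lasecD_inv_mulVec_le x hb hbc m]

theorem lasecD_succ_le (hb : 0 < b) (hbc : b < c) {k : ℕ} {t : ℝ} (ht : 0 < t)
    (hk : lasecD d b c x k ≤ t • 1) :
    lasecD d b c x (k + 1) ≤ ((t⁻¹ + c⁻¹)⁻¹ + x (k + 1) ⬝ᵥ x (k + 1)) • 1 := by
  rw [lasecD, add_smul]
  exact add_le_add ((posDef_lasecD x hb hbc k).inv_add_smul_one_inv_le ht (hb.trans hbc) hk)
    (vecMulVec_self_le_smul_one _)

theorem lasecD_one_le (hb : 0 < b) (hbc : b < c) :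
    lasecD d b c x 1 ≤ (b + x 1 ⬝ᵥ x 1) • 1 := by
  have ht : 0 < b * c / (c - b) := div_pos (mul_pos hb (hb.trans hbc)) (sub_pos.mpr hbc)
  have hb' : (b * c / (c - b))⁻¹ + c⁻¹ = b⁻¹ := by
    have := (hb.trans hbc).ne'; have := hb.ne'
    rw [inv_div]
    field_simp
    ring
  simpa only [hb', inv_inv] using lasecD_succ_le x hb hbc (k := 0) ht le_rfl

theorem lasecD_le_smul_one (hb : 0 < b) (hbc : b < c) {m : ℕ} {X K : ℝ}
    (hx : ∀ j ∈ Icc 1 m, x j ⬝ᵥ x j ≤ X ^ 2) (hKb : b + X ^ 2 ≤ K)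
    (hK : (X ^ 2 + √(X ^ 4 + 4 * X ^ 2 * c)) / 2 ≤ K) :
    ∀ k ∈ Icc 1 m, lasecD d b c x k ≤ K • 1 := by
  have hK0 : 0 < K := (by positivity : 0 < b + X ^ 2).trans_le hKb
  have hone : (0 : Matrix (Fin d) (Fin d) ℝ) ≤ 1 := nonneg_iff_posSemidef.mpr PosSemidef.one
  intro k hk
  obtain ⟨hk1, hkm⟩ := mem_Icc.mp hk
  induction k, hk1 using Nat.le_induction with
  | base =>
    refine (lasecD_one_le x hb hbc).trans (smul_le_smul_of_nonneg_right ?_ hone)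
    linarith [hx 1 (mem_Icc.mpr ⟨le_rfl, hkm⟩)]
  | succ k hk1 ih =>
    refine (lasecD_succ_le x hb hbc hK0 (ih (mem_Icc.mpr ⟨hk1, by omega⟩) (by omega))).trans
      (smul_le_smul_of_nonneg_right ?_ hone)
    have := hx (k + 1) (mem_Icc.mpr ⟨by omega, hkm⟩)
    linarith [inv_add_inv_inv_add_sq_le (hb.trans hbc) hK0 hK]

theorem sum_range_trace_lasecD_le (hb : 0 < b) (hbc : b < c) {m : ℕ} {K : ℝ} (hK0 : 0 ≤ K)
    (hK : ∀ k ∈ Icc 1 m, lasecD d b c x k ≤ K • 1) :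
    ∑ k ∈ range m, (lasecD d b c x k).trace ≤ (lasecD d b c x 0).trace + m * (d * K) := by
  cases m with
  | zero => simpa using (posDef_lasecD x hb hbc 0).posSemidef.trace_nonneg
  | succ m =>
    have htr : ∀ k ∈ range m, (lasecD d b c x (k + 1)).trace ≤ d * K := fun k hk => by
      simpa [mul_comm] using trace_mono (hK (k + 1) (by simp at hk ⊢; omega))
    have hsum := sum_le_sum htr
    rw [sum_const, card_range, nsmul_eq_mul] at hsum
    rw [sum_range_succ', add_comm]
    push_cast
    linarith [mul_nonneg (Nat.cast_nonneg d) hK0]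

theorem log_det_lasecD_sub_log_det_lasecD_zero_le (hb : 0 < b) (hbc : b < c) (m : ℕ) :
    Real.log (lasecD d b c x m).det - Real.log (lasecD d b c x 0).det
      ≤ Real.log (b⁻¹ • lasecD d b c x m).det := by
  have hbt : b ≤ b * c / (c - b) := by
    rw [le_div_iff₀ (sub_pos.mpr hbc)]; nlinarith
  have hlog := Real.log_le_log hb hbt
  have hD0 : (lasecD d b c x 0).det = (b * c / (c - b)) ^ d := by simp [lasecD]
  rw [det_smul, Fintype.card_fin, Real.log_mul (by positivity)
    (posDef_lasecD x hb hbc m).det_pos.ne', Real.log_pow, Real.log_inv, hD0, Real.log_pow]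
  nlinarith [Nat.cast_nonneg (α := ℝ) d]

end lasecD

theorem lasec_a4_general (d : ℕ) (b c : ℝ) (hb : 0 < b) (hbc : b < c)
    (m : ℕ) (X : ℝ) (x : ℕ → Fin d → ℝ)
    (hx : ∀ j ∈ Icc 1 m, (∑ i, (x j i) ^ 2) ≤ X ^ 2) :
    ∑ k ∈ Icc 1 m, x k ⬝ᵥ ((lasecD d b c x k)⁻¹ *ᵥ x k) ≤
      Real.log ((b⁻¹ • lasecD d b c x m).det)
        + c⁻¹ * (lasecD d b c x 0).trace
        + ((m : ℝ) / c) * (d : ℝ) *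
            max ((3 * X ^ 2 + Real.sqrt (X ^ 4 + 4 * X ^ 2 * c)) / 2) (b + X ^ 2) := by
  set K := max ((3 * X ^ 2 + Real.sqrt (X ^ 4 + 4 * X ^ 2 * c)) / 2) (b + X ^ 2)
  have hK0 : 0 ≤ K := (by positivity : 0 ≤ b + X ^ 2).trans (le_max_right _ _)
  have hxx : ∀ j ∈ Icc 1 m, x j ⬝ᵥ x j ≤ X ^ 2 := fun j hj => by
    simpa [dotProduct, sq] using hx j hj
  have hroot : (X ^ 2 + √(X ^ 4 + 4 * X ^ 2 * c)) / 2 ≤ K :=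
    le_trans (by linarith [sq_nonneg X]) (le_max_left _ _)
  have hDK := lasecD_le_smul_one x hb hbc hxx (le_max_right _ _) hroot
  have hquad := sum_dotProduct_lasecD_inv_mulVec_le x hb hbc m
  have htrace := sum_range_trace_lasecD_le x hb hbc hK0 hDK
  have hdet := log_det_lasecD_sub_log_det_lasecD_zero_le x hb hbc m
  have hc : 0 ≤ c⁻¹ := inv_nonneg.mpr (hb.trans hbc).le
  have hsplit : c⁻¹ * ((lasecD d b c x 0).trace + m * (d * K))
      = c⁻¹ * (lasecD d b c x 0).trace + m / c * d * K := by ring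
  linarith [mul_le_mul_of_nonneg_left htrace hc]

/-- inequality (a4): if `‖x_j‖² ≤ X²` for `j = 1,…,m`, then
`Σ_{k=1}^m x_kᵀ D_k⁻¹ x_k ≤ ln det((1/b) D_m) + c⁻¹ Tr(D_0)
 + (m/c) d max{(3X² + √(X⁴ + 4X²c))/2, b + X²}`. -/
theorem lasec_a4 (d : ℕ) (hd : 1 ≤ d) (b c : ℝ) (hb : 0 < b) (hbc : b < c)
    (m : ℕ) (hm : 1 ≤ m) (X : ℝ) (hX : 0 < X) (x : ℕ → Fin d → ℝ)
    (hx : ∀ j ∈ Icc 1 m, (∑ i, (x j i) ^ 2) ≤ X ^ 2) :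
    ∑ k ∈ Icc 1 m, x k ⬝ᵥ ((lasecD d b c x k)⁻¹ *ᵥ x k) ≤
      Real.log ((b⁻¹ • lasecD d b c x m).det)
        + c⁻¹ * (lasecD d b c x 0).trace
        + ((m : ℝ) / c) * (d : ℝ) *
            max ((3 * X ^ 2 + Real.sqrt (X ^ 4 + 4 * X ^ 2 * c)) / 2) (b + X ^ 2) :=
  lasec_a4_general d b c hb hbc m X x hx

end
end
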